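/- arXiv:math/0510103 — 6 statements merged into one kernel-verified Lean document; each statement's English description precedes it below -/
import Mathlib

section
/- Let H be a Hilbert space and let P_1, ..., P_{n+1} be pairwise commuting orthogonal projections on H. Let ξ_1, ..., ξ_{n+1} ∈ H be vectors such that P_j ξ_j = ξ_j for every j and (P_1 ∘ P_2 ∘ ... ∘ P_{n+1}) ξ_j = 0 for every j. Then ‖ξ_1 + ... + ξ_{n+1}‖² ≤ n · (‖ξ_1‖² + ... + ‖ξ_{n+1}‖²). -/
section helpers

variable {𝕜 : Type*} [RCLike 𝕜] {H : Type*} [NormedAddCommGroup H] [InnerProductSpace 𝕜 H]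
  [CompleteSpace H]

local notation "⟪" x ", " y "⟫" => @inner 𝕜 _ _ x y

private lemma sa_inner (A : H →L[𝕜] H) (h : IsSelfAdjoint A) (x y : H) :
    ⟪A x, y⟫ = ⟪x, A y⟫ := by
  conv_lhs => rw [← (ContinuousLinearMap.isSelfAdjoint_iff'.mp h)]
  exact ContinuousLinearMap.adjoint_inner_left A y x

omit [CompleteSpace H] in
private lemma aux_norm_sum_sq {ι : Type*} [Fintype ι] (w : ι → H)
    (h : ∀ i j, i ≠ j → ⟪w i, w j⟫ = 0) :
    ‖∑ i, w i‖ ^ 2 = ∑ i, ‖w i‖ ^ 2 := by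
  have h1 : ⟪∑ i, w i, ∑ j, w j⟫ = ∑ i, ⟪w i, w i⟫ := by
    rw [sum_inner]
    refine Finset.sum_congr rfl fun i _ => ?_
    rw [inner_sum, Finset.sum_eq_single i]
    · intro j _ hj
      exact h i j (Ne.symm hj)
    · intro hi; exact absurd (Finset.mem_univ i) hi
  have h2 := congrArg (RCLike.re (K := 𝕜)) h1
  rw [map_sum] at h2
  simpa [inner_self_eq_norm_sq] using h2

end helpers

/-- If `P 0, …, P n` are pairwise commuting orthogonal projections on a
Hilbert space `H`, and `ξ 0, …, ξ n` are vectors with `P j (ξ j) = ξ j` and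
`(P 0 ∘ ⋯ ∘ P n) (ξ j) = 0` for every `j`, then
`‖ξ 0 + ⋯ + ξ n‖² ≤ n • (‖ξ 0‖² + ⋯ + ‖ξ n‖²)`. -/
theorem norm_sq_sum_le_of_commuting_projections
    {𝕜 : Type*} [RCLike 𝕜] {H : Type*} [NormedAddCommGroup H] [InnerProductSpace 𝕜 H]
    [CompleteSpace H] {n : ℕ} (hn : 1 ≤ n)
    (P : Fin (n + 1) → H →L[𝕜] H)
    (hidem : ∀ j, IsIdempotentElem (P j))
    (hsa : ∀ j, IsSelfAdjoint (P j))
    (hcomm : ∀ i j, P i ∘L P j = P j ∘L P i)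
    (ξ : Fin (n + 1) → H)
    (hfix : ∀ j, P j (ξ j) = ξ j)
    (hzero : ∀ j, (List.ofFn P).prod (ξ j) = 0) :
    ‖∑ j, ξ j‖ ^ 2 ≤ (n : ℝ) * ∑ j, ‖ξ j‖ ^ 2 := by
  classical
  have hcomm' : ∀ i j, P i * P j = P j * P i := hcomm
  set L : List (H →L[𝕜] H) := List.ofFn P with hL
  have hLlen : L.length = n + 1 := by simp [hL]
  set Q : ℕ → (H →L[𝕜] H) := fun k => (L.take k).prod with hQ
  have hQ0 : Q 0 = 1 := by simp [hQ]
  have hQsucc : ∀ (k : ℕ) (hk : k < n + 1), Q (k + 1) = Q k * P ⟨k, hk⟩ := by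
    intro k hk
    have hk' : k < L.length := by omega
    simp only [hQ, List.prod_take_succ L k hk']
    congr 1
    exact List.getElem_ofFn (by simpa using hk)
  have hQtop : Q (n + 1) = L.prod := by
    simp [hQ, List.take_of_length_le (le_of_eq hLlen)]
  -- Q commutes with every P j
  have hQcomm : ∀ k, ∀ j, Q k * P j = P j * Q k := by
    intro k
    induction k with
    | zero => intro j; simp [hQ0]
    | succ k ih =>
      intro j
      by_cases hk : k < n + 1
      · rw [hQsucc k hk, mul_assoc, hcomm' _ j, ← mul_assoc, ih j, mul_assoc]
      · have : Q (k + 1) = Q k := by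
          simp only [hQ]
          rw [List.take_of_length_le (by omega), List.take_of_length_le (by omega)]
        rw [this]; exact ih j
  -- Q is self-adjoint
  have hQsa : ∀ k, k ≤ n + 1 → IsSelfAdjoint (Q k) := by
    intro k
    induction k with
    | zero => intro _; rw [hQ0]; exact IsSelfAdjoint.one _
    | succ k ih =>
      intro hk
      have hk' : k < n + 1 := by omega
      rw [hQsucc k hk', IsSelfAdjoint, star_mul, (hsa _).star_eq, (ih (by omega)).star_eq]
      exact (hQcomm k _).symm
  -- Q is idempotent
  have hQidem : ∀ k, k ≤ n + 1 → IsIdempotentElem (Q k) := by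
    intro k
    induction k with
    | zero => intro _; rw [hQ0]; exact IsIdempotentElem.one
    | succ k ih =>
      intro hk
      have hk' : k < n + 1 := by omega
      rw [hQsucc k hk']
      show Q k * P _ * (Q k * P _) = Q k * P _
      rw [mul_assoc, ← mul_assoc (P _), ← hQcomm k _, mul_assoc (Q k), (hidem _).eq,
        ← mul_assoc, (ih (by omega)).eq]
  -- absorption: for j < k, Q k * P j = Q k
  have hQabs : ∀ k, ∀ j : Fin (n + 1), (j : ℕ) < k → Q k * P j = Q k := by
    intro k
    induction k with
    | zero => intro j hj; omega
    | succ k ih =>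
      intro j hj
      by_cases hk : k < n + 1
      · rw [hQsucc k hk]
        by_cases hjk : (j : ℕ) = k
        · have : (⟨k, hk⟩ : Fin (n + 1)) = j := Fin.ext (by simpa using hjk.symm)
          rw [this, mul_assoc, (hidem j).eq]
        · have hjk' : (j : ℕ) < k := by omega
          rw [mul_assoc, hcomm' _ j, ← mul_assoc, ih j hjk']
      · have : Q (k + 1) = Q k := by
          simp only [hQ]
          rw [List.take_of_length_le (by omega), List.take_of_length_le (by omega)]
        rw [this]; exact ih j (by omega)
  -- the projections E k
  set E : Fin (n + 1) → (H →L[𝕜] H) := fun k => Q k * (1 - P k) with hE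
  have hEsa : ∀ k, IsSelfAdjoint (E k) := by
    intro k
    rw [hE]
    show IsSelfAdjoint (Q (k : ℕ) * (1 - P k))
    rw [IsSelfAdjoint, star_mul, star_sub, star_one, (hsa k).star_eq,
      (hQsa k (by omega)).star_eq, sub_mul, one_mul, mul_sub, mul_one, hQcomm]
  -- E k * E l = 0 for k ≠ l
  have hEmul : ∀ k l : Fin (n + 1), (k : ℕ) < (l : ℕ) → E k * E l = 0 := by
    intro k l hkl
    have h1 : (1 - P k) * Q l = 0 := by
      rw [sub_mul, one_mul, ← hQcomm, hQabs _ k hkl, sub_self]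
    show Q k * (1 - P k) * (Q l * (1 - P l)) = 0
    rw [mul_assoc, ← mul_assoc (1 - P k), h1, zero_mul, mul_zero]
  have hEmul' : ∀ k l : Fin (n + 1), k ≠ l → E k * E l = 0 := by
    intro k l hkl
    rcases lt_or_gt_of_ne (fun h : (k : ℕ) = (l : ℕ) => hkl (by ext; exact h)) with h | h
    · exact hEmul k l h
    · have h0 := hEmul l k h
      calc E k * E l = star (star (E l) * star (E k)) := by
            rw [← star_mul, star_star]
          _ = star (E l * E k) := by rw [(hEsa k).star_eq, (hEsa l).star_eq]
          _ = 0 := by rw [h0, star_zero]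
  -- telescoping sum
  have hEsum : ∑ k, E k = 1 - Q (n + 1) := by
    have : ∀ k : Fin (n + 1), E k = Q k - Q ((k : ℕ) + 1) := by
      intro k
      rw [hE]
      show Q (k : ℕ) * (1 - P k) = _
      rw [mul_sub, mul_one, hQsucc (k : ℕ) k.isLt, Fin.eta]
    simp_rw [this]
    rw [Fin.sum_univ_eq_sum_range (fun i => Q i - Q (i + 1)), Finset.sum_range_sub' Q, hQ0]
  -- applied facts
  have hEapp : ∀ v : H, ∑ k, E k v = v - Q (n + 1) v := by
    intro v
    have := congrArg (fun (T : H →L[𝕜] H) => T v) hEsum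
    simpa [ContinuousLinearMap.sum_apply] using this
  have hQtopxi : ∀ j, Q (n + 1) (ξ j) = 0 := by
    intro j; rw [hQtop]; exact hzero j
  have hExi : ∀ j, ∑ k, E k (ξ j) = ξ j := by
    intro j; rw [hEapp, hQtopxi, sub_zero]
  -- orthogonality of images
  have horth : ∀ (v w : H) (k l : Fin (n + 1)), k ≠ l →
      @inner 𝕜 _ _ (E k v) (E l w) = 0 := by
    intro v w k l hkl
    rw [sa_inner (E k) (hEsa k) v (E l w)]
    have : E k (E l w) = (E k * E l) w := rfl
    rw [this, hEmul' k l hkl]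
    simp
  -- E k kills ξ k
  have hEk0 : ∀ k, E k (ξ k) = 0 := by
    intro k
    show (Q (k : ℕ) * (1 - P k)) (ξ k) = 0
    rw [ContinuousLinearMap.mul_apply]
    have : (1 - P k) (ξ k) = 0 := by
      simp [ContinuousLinearMap.sub_apply, hfix k]
    rw [this, map_zero]
  set ξs : H := ∑ j, ξ j with hξs
  have hξsrep : ξs = ∑ k, E k ξs := by
    rw [hEapp]
    have : Q (n + 1) ξs = 0 := by
      rw [hξs, map_sum]
      exact Finset.sum_eq_zero fun j _ => hQtopxi j
    rw [this, sub_zero]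
  -- step 1 : ‖ξs‖² = ∑ ‖E k ξs‖²
  have step1 : ‖ξs‖ ^ 2 = ∑ k, ‖E k ξs‖ ^ 2 := by
    conv_lhs => rw [hξsrep]
    exact aux_norm_sum_sq _ (fun i j hij => horth ξs ξs i j hij)
  -- step 3 : per-k Cauchy-Schwarz
  have step3 : ∀ k, ‖E k ξs‖ ^ 2 ≤ (n : ℝ) * ∑ j ∈ Finset.univ.erase k, ‖E k (ξ j)‖ ^ 2 := by
    intro k
    have hrep : E k ξs = ∑ j ∈ Finset.univ.erase k, E k (ξ j) := by
      rw [hξs, map_sum, ← Finset.add_sum_erase _ _ (Finset.mem_univ k), hEk0, zero_add]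
    have hcard : (Finset.univ.erase k).card = n := by
      rw [Finset.card_erase_of_mem (Finset.mem_univ k)]
      simp
    calc ‖E k ξs‖ ^ 2 = ‖∑ j ∈ Finset.univ.erase k, E k (ξ j)‖ ^ 2 := by rw [hrep]
      _ ≤ (∑ j ∈ Finset.univ.erase k, ‖E k (ξ j)‖) ^ 2 := by
          have h1 := norm_sum_le (Finset.univ.erase k) (fun j => E k (ξ j))
          exact pow_le_pow_left₀ (norm_nonneg _) h1 2
      _ ≤ (Finset.univ.erase k).card * ∑ j ∈ Finset.univ.erase k, ‖E k (ξ j)‖ ^ 2 :=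
          sq_sum_le_card_mul_sum_sq
      _ = (n : ℝ) * ∑ j ∈ Finset.univ.erase k, ‖E k (ξ j)‖ ^ 2 := by rw [hcard]
  -- step 4 : column sums
  have step4 : ∀ j, ∑ k, ‖E k (ξ j)‖ ^ 2 = ‖ξ j‖ ^ 2 := by
    intro j
    rw [← aux_norm_sum_sq (fun k => E k (ξ j)) (fun i l hil => horth (ξ j) (ξ j) i l hil), hExi j]
  calc ‖ξs‖ ^ 2 = ∑ k, ‖E k ξs‖ ^ 2 := step1
    _ ≤ ∑ k, (n : ℝ) * ∑ j ∈ Finset.univ.erase k, ‖E k (ξ j)‖ ^ 2 :=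
        Finset.sum_le_sum fun k _ => step3 k
    _ = (n : ℝ) * ∑ k, ∑ j ∈ Finset.univ.erase k, ‖E k (ξ j)‖ ^ 2 := by
        rw [Finset.mul_sum]
    _ ≤ (n : ℝ) * ∑ k, ∑ j, ‖E k (ξ j)‖ ^ 2 := by
        apply mul_le_mul_of_nonneg_left _ (by positivity)
        refine Finset.sum_le_sum fun k _ => ?_
        exact Finset.sum_le_sum_of_subset_of_nonneg (Finset.erase_subset _ _)
          (fun _ _ _ => by positivity)
    _ = (n : ℝ) * ∑ j, ∑ k, ‖E k (ξ j)‖ ^ 2 := by rw [Finset.sum_comm]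
    _ = (n : ℝ) * ∑ j, ‖ξ j‖ ^ 2 := by
        congr 1
        exact Finset.sum_congr rfl fun j _ => step4 j
end

section
/- Let X_1, ..., X_{n+1} be mutually independent real random variables on a probability space (Ω, P), and for each j let ξ_j be a square-integrable random variable that is measurable with respect to σ(X_i : i ≠ j) and satisfies E[ξ_j] = 0. Then E[(ξ_1 + ... + ξ_{n+1})²] ≤ n · (E[ξ_1²] + ... + E[ξ_{n+1}²]). -/
open MeasureTheory ProbabilityTheory

section Helpers

variable {Ω : Type*} {m m₁ m₂ : MeasurableSpace Ω} {m0 : MeasurableSpace Ω} {μ : Measure Ω}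
  [IsProbabilityMeasure μ]

lemma aux_mul_integrable {f g : Ω → ℝ} (hf : MemLp f 2 μ) (hg : MemLp g 2 μ) :
    Integrable (fun ω => f ω * g ω) μ := by
  refine (hf.integrable_sq.add hg.integrable_sq).mono'
    (hf.aestronglyMeasurable.mul hg.aestronglyMeasurable)
    (Filter.Eventually.of_forall fun ω => ?_)
  have h := abs_mul (f ω) (g ω)
  have := sq_nonneg (|f ω| - |g ω|)
  simp only [Real.norm_eq_abs, Pi.add_apply]
  nlinarith [sq_abs (f ω), sq_abs (g ω), abs_nonneg (f ω * g ω)]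

lemma aux_indep_mono {m₁ m₂ m₁' m₂' : MeasurableSpace Ω} (h : Indep m₁ m₂ μ)
    (h1 : m₁' ≤ m₁) (h2 : m₂' ≤ m₂) : Indep m₁' m₂' μ := by
  rw [Indep_iff] at h ⊢
  exact fun t1 t2 ht1 ht2 => h t1 t2 (h1 _ ht1) (h2 _ ht2)

lemma aux_memL2_condexp (hm : m ≤ m0) {f : Ω → ℝ}
    (hf : MemLp f 2 μ) : MemLp (μ[f|m]) 2 μ := by
  haveI : SigmaFinite (μ.trim hm) := inferInstance
  have hg : MemLp (((condExpL2 ℝ ℝ hm (hf.toLp f) :) : Lp ℝ 2 μ) : Ω → ℝ) 2 μ := Lp.memLp _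
  have heq : μ[f|m] =ᵐ[μ] (((condExpL2 ℝ ℝ hm (hf.toLp f) :) : Lp ℝ 2 μ) : Ω → ℝ) := by
    refine (ae_eq_condExp_of_forall_setIntegral_eq hm (hf.integrable one_le_two)
      (fun s _ _ => (hg.integrable one_le_two).integrableOn)
      (fun s hs hμs => ?_) ?_).symm
    · rw [integral_condExpL2_eq hm (hf.toLp f) hs hμs.ne]
      exact setIntegral_congr_ae (hm _ hs) ((hf.coeFn_toLp).mono fun x hx _ => hx)
    · exact (aestronglyMeasurable_condExpL2 hm (hf.toLp f))
  exact hg.ae_eq heq.symm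

/-- pull-out: `∫ g f = ∫ g E[f|m]` for `g` `m`-measurable, both L². -/
lemma aux_integral_mul_condexp (hm : m ≤ m0) {f g : Ω → ℝ}
    (hgm : StronglyMeasurable[m] g) (hg : MemLp g 2 μ) (hf : MemLp f 2 μ) :
    ∫ ω, g ω * f ω ∂μ = ∫ ω, g ω * (μ[f|m]) ω ∂μ := by
  haveI : SigmaFinite (μ.trim hm) := inferInstance
  have h1 : Integrable (g * f) μ := aux_mul_integrable hg hf
  calc ∫ ω, g ω * f ω ∂μ = ∫ ω, (g * f) ω ∂μ := rfl
    _ = ∫ ω, (μ[g * f|m]) ω ∂μ := (integral_condExp hm).symm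
    _ = ∫ ω, (g * μ[f|m]) ω ∂μ := integral_congr_ae
        (condExp_mul_of_stronglyMeasurable_left hgm h1 (hf.integrable one_le_two))
    _ = ∫ ω, g ω * (μ[f|m]) ω ∂μ := rfl

/-- orthogonality of martingale increments against earlier measurable functions -/
lemma aux_orth (h12 : m₁ ≤ m₂) (h2 : m₂ ≤ m0) {f g : Ω → ℝ}
    (hgm : StronglyMeasurable[m₁] g) (hg : MemLp g 2 μ) (hf : MemLp f 2 μ) :
    ∫ ω, g ω * ((μ[f|m₂]) ω - (μ[f|m₁]) ω) ∂μ = 0 := by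
  have h1 : m₁ ≤ m0 := h12.trans h2
  have e2 : ∫ ω, g ω * (μ[f|m₂]) ω ∂μ = ∫ ω, g ω * f ω ∂μ :=
    (aux_integral_mul_condexp h2 (hgm.mono h12) hg hf).symm
  have e1 : ∫ ω, g ω * (μ[f|m₁]) ω ∂μ = ∫ ω, g ω * f ω ∂μ :=
    (aux_integral_mul_condexp h1 hgm hg hf).symm
  have i2 : Integrable (fun ω => g ω * (μ[f|m₂]) ω) μ :=
    aux_mul_integrable hg (aux_memL2_condexp h2 hf)
  have i1 : Integrable (fun ω => g ω * (μ[f|m₁]) ω) μ :=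
    aux_mul_integrable hg (aux_memL2_condexp h1 hf)
  have : ∫ ω, g ω * ((μ[f|m₂]) ω - (μ[f|m₁]) ω) ∂μ
      = ∫ ω, (g ω * (μ[f|m₂]) ω - g ω * (μ[f|m₁]) ω) ∂μ := by
    congr 1; funext ω; ring
  rw [this, integral_sub i2 i1, e1, e2, sub_self]

/-- one-step Pythagoras -/
lemma aux_step (h12 : m₁ ≤ m₂) (h2 : m₂ ≤ m0) {f : Ω → ℝ} (hf : MemLp f 2 μ) :
    ∫ ω, ((μ[f|m₂]) ω - (μ[f|m₁]) ω) ^ 2 ∂μ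
      = ∫ ω, (μ[f|m₂]) ω ^ 2 ∂μ - ∫ ω, (μ[f|m₁]) ω ^ 2 ∂μ := by
  have h1 : m₁ ≤ m0 := h12.trans h2
  have hb2 : MemLp (μ[f|m₂]) 2 μ := aux_memL2_condexp h2 hf
  have hb1 : MemLp (μ[f|m₁]) 2 μ := aux_memL2_condexp h1 hf
  have horth : ∫ ω, (μ[f|m₁]) ω * ((μ[f|m₂]) ω - (μ[f|m₁]) ω) ∂μ = 0 :=
    aux_orth h12 h2 stronglyMeasurable_condExp hb1 hf
  have expand : ∀ ω, ((μ[f|m₂]) ω - (μ[f|m₁]) ω) ^ 2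
      = (μ[f|m₂]) ω ^ 2 - (μ[f|m₁]) ω ^ 2
        - 2 * ((μ[f|m₁]) ω * ((μ[f|m₂]) ω - (μ[f|m₁]) ω)) := fun ω => by ring
  have i22 : Integrable (fun ω => (μ[f|m₂]) ω ^ 2) μ := hb2.integrable_sq
  have i11 : Integrable (fun ω => (μ[f|m₁]) ω ^ 2) μ := hb1.integrable_sq
  have i12 : Integrable (fun ω => (μ[f|m₁]) ω * ((μ[f|m₂]) ω - (μ[f|m₁]) ω)) μ :=
    aux_mul_integrable hb1 (hb2.sub hb1)
  have iA : Integrable (fun ω => (μ[f|m₂]) ω ^ 2 - (μ[f|m₁]) ω ^ 2) μ := i22.sub i11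
  have iB : Integrable (fun ω => 2 * ((μ[f|m₁]) ω * ((μ[f|m₂]) ω - (μ[f|m₁]) ω))) μ :=
    i12.const_mul 2
  calc ∫ ω, ((μ[f|m₂]) ω - (μ[f|m₁]) ω) ^ 2 ∂μ
      = ∫ ω, ((μ[f|m₂]) ω ^ 2 - (μ[f|m₁]) ω ^ 2
          - 2 * ((μ[f|m₁]) ω * ((μ[f|m₂]) ω - (μ[f|m₁]) ω))) ∂μ := by
        simp_rw [expand]
    _ = ∫ ω, (μ[f|m₂]) ω ^ 2 ∂μ - ∫ ω, (μ[f|m₁]) ω ^ 2 ∂μ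
          - 2 * ∫ ω, (μ[f|m₁]) ω * ((μ[f|m₂]) ω - (μ[f|m₁]) ω) ∂μ := by
        rw [integral_sub iA iB, integral_sub i22 i11, integral_const_mul]
    _ = ∫ ω, (μ[f|m₂]) ω ^ 2 ∂μ - ∫ ω, (μ[f|m₁]) ω ^ 2 ∂μ := by
        rw [horth]; ring

end Helpers

section Drop

variable {Ω : Type*} {mG m₂ mH : MeasurableSpace Ω} {m0 : MeasurableSpace Ω} {μ : Measure Ω}
  [IsProbabilityMeasure μ]

/-- Conditioning on extra independent information changes nothing. -/
lemma aux_condexp_drop (hGH : mG ≤ mH) (hH : mH ≤ m0) (h2 : m₂ ≤ m0)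
    (hindep : Indep mH m₂ μ) {f : Ω → ℝ} (hfH : StronglyMeasurable[mH] f)
    (hfi : Integrable f μ) :
    μ[f | mG ⊔ m₂] =ᵐ[μ] μ[f | mG] := by
  have hG : mG ≤ m0 := hGH.trans hH
  have hsup : mG ⊔ m₂ ≤ m0 := sup_le hG h2
  haveI : SigmaFinite (μ.trim hsup) := inferInstance
  haveI : SigmaFinite (μ.trim hG) := inferInstance
  set P : Set (Set Ω) :=
    {s | ∃ a b, MeasurableSet[mG] a ∧ MeasurableSet[m₂] b ∧ s = a ∩ b} with hP
  have hpi : IsPiSystem P := by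
    rintro s ⟨a, b, ha, hb, rfl⟩ t ⟨a', b', ha', hb', rfl⟩ -
    exact ⟨a ∩ a', b ∩ b', ha.inter ha', hb.inter hb', by
      rw [Set.inter_inter_inter_comm]⟩
  have hgen : mG ⊔ m₂ = MeasurableSpace.generateFrom P := by
    refine le_antisymm (sup_le ?_ ?_) (MeasurableSpace.generateFrom_le ?_)
    · exact fun s hs => MeasurableSpace.measurableSet_generateFrom
        ⟨s, Set.univ, hs, MeasurableSet.univ, (Set.inter_univ s).symm⟩
    · exact fun s hs => MeasurableSpace.measurableSet_generateFrom
        ⟨Set.univ, s, MeasurableSet.univ, hs, (Set.univ_inter s).symm⟩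
    · rintro t ⟨a, b, ha, hb, rfl⟩
      exact ((le_sup_left : mG ≤ mG ⊔ m₂) a ha).inter ((le_sup_right : m₂ ≤ mG ⊔ m₂) b hb)
  have key : ∀ s, MeasurableSet[mG ⊔ m₂] s →
      ∫ ω in s, (μ[f|mG]) ω ∂μ = ∫ ω in s, f ω ∂μ := by
    have hbasic : ∀ t ∈ P, ∫ ω in t, (μ[f|mG]) ω ∂μ = ∫ ω in t, f ω ∂μ := by
      rintro t ⟨a, b, ha, hb, rfl⟩
      have ham : MeasurableSet a := hG _ ha
      have hbm : MeasurableSet b := h2 _ hb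
      have hprod : ∀ (h : Ω → ℝ) (ω : Ω),
          (a ∩ b).indicator h ω = a.indicator h ω * b.indicator 1 ω := by
        intro h ω
        by_cases hb' : ω ∈ b <;> by_cases ha' : ω ∈ a <;>
          simp [Set.indicator_apply, ha', hb', Set.mem_inter_iff]
      have hcalc : ∀ (h : Ω → ℝ), StronglyMeasurable[mH] h → Integrable h μ →
          ∫ ω in a ∩ b, h ω ∂μ = (∫ ω in a, h ω ∂μ) * ∫ ω, b.indicator 1 ω ∂μ := by
        intro h hhm hhi
        have h1 : IndepFun (a.indicator h) (b.indicator (1 : Ω → ℝ)) μ := by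
          rw [IndepFun_iff_Indep]
          refine aux_indep_mono hindep ?_ ?_
          · exact (hhm.measurable.indicator (hGH _ ha)).comap_le
          · exact ((measurable_const (a := (1:ℝ))).indicator hb).comap_le
        have := h1.integral_mul_eq_mul_integral ((hhm.measurable.indicator (hGH _ ha)).mono hH
            le_rfl).aestronglyMeasurable
          (((measurable_const (a := (1:ℝ))).indicator hb).mono h2 le_rfl).aestronglyMeasurable
        calc ∫ ω in a ∩ b, h ω ∂μ = ∫ ω, (a ∩ b).indicator h ω ∂μ :=
              (integral_indicator (ham.inter hbm)).symm
          _ = ∫ ω, a.indicator h ω * b.indicator 1 ω ∂μ := by simp_rw [hprod]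
          _ = (∫ ω, a.indicator h ω ∂μ) * ∫ ω, b.indicator 1 ω ∂μ := this
          _ = (∫ ω in a, h ω ∂μ) * ∫ ω, b.indicator 1 ω ∂μ := by
              rw [integral_indicator ham]
      rw [hcalc f hfH hfi, hcalc (μ[f|mG]) (stronglyMeasurable_condExp.mono hGH)
        integrable_condExp, setIntegral_condExp hG hfi ha]
    have hempty : ∫ ω in (∅ : Set Ω), (μ[f|mG]) ω ∂μ = ∫ ω in (∅ : Set Ω), f ω ∂μ := by
      simp
    have hcompl : ∀ t, MeasurableSet[mG ⊔ m₂] t →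
        (∫ ω in t, (μ[f|mG]) ω ∂μ = ∫ ω in t, f ω ∂μ) →
        ∫ ω in tᶜ, (μ[f|mG]) ω ∂μ = ∫ ω in tᶜ, f ω ∂μ := by
      intro t ht hQ
      have htm : MeasurableSet t := hsup _ ht
      have e1 := integral_add_compl htm (integrable_condExp (f := f) (m := mG) (μ := μ))
      have e2 := integral_add_compl htm hfi
      have e3 : ∫ ω, (μ[f|mG]) ω ∂μ = ∫ ω, f ω ∂μ := integral_condExp hG
      linarith
    have hunion : ∀ g : ℕ → Set Ω, Pairwise (Function.onFun Disjoint g) →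
        (∀ i, MeasurableSet[mG ⊔ m₂] (g i)) →
        (∀ i, ∫ ω in g i, (μ[f|mG]) ω ∂μ = ∫ ω in g i, f ω ∂μ) →
        ∫ ω in ⋃ i, g i, (μ[f|mG]) ω ∂μ = ∫ ω in ⋃ i, g i, f ω ∂μ := by
      intro g hdisj hgm hQ
      rw [integral_iUnion (fun i => hsup _ (hgm i)) hdisj
          integrable_condExp.integrableOn,
        integral_iUnion (fun i => hsup _ (hgm i)) hdisj hfi.integrableOn]
      exact tsum_congr hQ
    exact fun s hs => @MeasurableSpace.induction_on_inter Ω (mG ⊔ m₂)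
      (fun t _ => ∫ ω in t, (μ[f|mG]) ω ∂μ = ∫ ω in t, f ω ∂μ) P
      hgen hpi hempty hbasic hcompl hunion s hs
  refine (ae_eq_condExp_of_forall_setIntegral_eq hsup hfi
    (fun s _ _ => integrable_condExp.integrableOn)
    (fun s hs _ => key s hs) ?_).symm
  exact (stronglyMeasurable_condExp.mono (le_sup_left : mG ≤ mG ⊔ m₂)).aestronglyMeasurable

end Drop

/-- If `X 0, …, X n` are mutually independent real random variables and,
for each `j`, `ξ j` is square-integrable, measurable with respect to `σ(X i : i ≠ j)`, and
centered, then `E[(ξ 0 + ⋯ + ξ n)²] ≤ n * (E[ξ 0²] + ⋯ + E[ξ n²])`. -/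
theorem integral_sq_sum_le_of_indep
    {Ω : Type*} [MeasurableSpace Ω] (μ : Measure Ω) [IsProbabilityMeasure μ]
    {n : ℕ} (hn : 1 ≤ n)
    (X : Fin (n + 1) → Ω → ℝ) (hX : ∀ i, Measurable (X i))
    (hindep : iIndepFun X μ)
    (ξ : Fin (n + 1) → Ω → ℝ)
    (hL2 : ∀ j, MemLp (ξ j) 2 μ)
    (hmeas : ∀ j, Measurable[⨆ i ∈ {i | i ≠ j}, MeasurableSpace.comap (X i) inferInstance] (ξ j))
    (hcent : ∀ j, ∫ ω, ξ j ω ∂μ = 0) :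
    ∫ ω, (∑ j, ξ j ω) ^ 2 ∂μ ≤ (n : ℝ) * ∑ j, ∫ ω, (ξ j ω) ^ 2 ∂μ := by
  classical
  -- basic sigma-algebras
  let C : Fin (n + 1) → MeasurableSpace Ω :=
    fun i => MeasurableSpace.comap (X i) inferInstance
  have hC : ∀ i, C i ≤ ‹MeasurableSpace Ω› := fun i => (hX i).comap_le
  let G : ℕ → MeasurableSpace Ω := fun k => ⨆ i : Fin (n + 1), ⨆ _ : (i : ℕ) < k, C i
  have hGle : ∀ k, G k ≤ ‹MeasurableSpace Ω› :=
    fun k => iSup_le fun i => iSup_le fun _ => hC i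
  have hGmono : Monotone G := fun k l hkl =>
    iSup_mono fun i => iSup_le fun h => le_iSup (fun _ : (i : ℕ) < l => C i) (lt_of_lt_of_le h hkl)
  have hG0 : G 0 = ⊥ :=
    le_antisymm (iSup_le fun i => iSup_le fun h => absurd h (Nat.not_lt_zero _)) bot_le
  let H : Fin (n + 1) → MeasurableSpace Ω := fun j => ⨆ i ∈ {i | i ≠ j}, C i
  have hHle : ∀ j, H j ≤ ‹MeasurableSpace Ω› :=
    fun j => iSup_le fun i => iSup_le fun _ => hC i
  have hGH : ∀ j : Fin (n + 1), G (j : ℕ) ≤ H j := by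
    intro j
    refine iSup_le fun i => iSup_le fun hij => ?_
    exact le_iSup₂_of_le i (show i ∈ {i | i ≠ j} from Fin.ne_of_lt hij) le_rfl
  have hHtop : ∀ j, H j ≤ G (n + 1) := fun j =>
    iSup_le fun i => iSup_le fun _ =>
      le_iSup_of_le i (le_iSup (fun _ : (i : ℕ) < n + 1 => C i) i.isLt)
  have hGsucc : ∀ j : Fin (n + 1), G ((j : ℕ) + 1) = G (j : ℕ) ⊔ C j := by
    intro j
    apply le_antisymm
    · refine iSup_le fun i => iSup_le fun hi => ?_
      rcases Nat.lt_succ_iff_lt_or_eq.mp hi with h | h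
      · exact le_sup_of_le_left (le_iSup_of_le i (le_iSup (fun _ : (i : ℕ) < j => C i) h))
      · have : i = j := Fin.ext h
        subst this
        exact le_sup_right
    · exact sup_le (hGmono (Nat.le_succ _))
        (le_iSup_of_le j (le_iSup (fun _ : ((j : Fin (n+1)) : ℕ) < (j : ℕ) + 1 => C j)
          (Nat.lt_succ_self _)))
  -- independence
  have hind : ∀ j : Fin (n + 1), Indep (H j) (C j) μ := by
    intro j
    have hdisj : Disjoint {i : Fin (n + 1) | i ≠ j} {j} := by
      rw [Set.disjoint_singleton_right]; simp
    have h := indep_iSup_of_disjoint hC hindep.iIndep hdisj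
    simpa only [Set.mem_singleton_iff, iSup_iSup_eq_left] using h
  -- conditional expectations
  have hξint : ∀ j, Integrable (ξ j) μ := fun j => (hL2 j).integrable one_le_two
  have hdrop : ∀ j : Fin (n + 1), μ[ξ j | G ((j : ℕ) + 1)] =ᵐ[μ] μ[ξ j | G (j : ℕ)] := by
    intro j
    have h := aux_condexp_drop (hGH j) (hHle j) (hC j) (hind j)
      ((hmeas j).stronglyMeasurable) (hξint j) (μ := μ)
    rwa [← hGsucc j] at h
  let F : Fin (n + 1) → ℕ → Ω → ℝ := fun j k => μ[ξ j | G k]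
  have hF2 : ∀ j k, MemLp (F j k) 2 μ := fun j k => aux_memL2_condexp (hGle k) (hL2 j)
  have hFtop : ∀ j, F j (n + 1) = ξ j := fun j =>
    condExp_of_stronglyMeasurable (hGle (n + 1))
      (((hmeas j).mono (hHtop j) le_rfl).stronglyMeasurable) (hξint j)
  have hF0 : ∀ j, F j 0 = fun _ => (0 : ℝ) := by
    intro j
    show μ[ξ j | G 0] = _
    rw [hG0, condExp_bot, hcent j]
  -- telescoping identity for each j
  have hCj : ∀ j : Fin (n + 1), ∑ k ∈ Finset.range (n + 1),
      ∫ ω, (F j (k + 1) ω - F j k ω) ^ 2 ∂μ = ∫ ω, (ξ j ω) ^ 2 ∂μ := by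
    intro j
    have hstep : ∀ k, ∫ ω, (F j (k + 1) ω - F j k ω) ^ 2 ∂μ
        = (∫ ω, F j (k + 1) ω ^ 2 ∂μ) - ∫ ω, F j k ω ^ 2 ∂μ := fun k =>
      aux_step (hGmono (Nat.le_succ k)) (hGle (k + 1)) (hL2 j)
    calc ∑ k ∈ Finset.range (n + 1), ∫ ω, (F j (k + 1) ω - F j k ω) ^ 2 ∂μ
        = ∑ k ∈ Finset.range (n + 1),
            ((∫ ω, F j (k + 1) ω ^ 2 ∂μ) - ∫ ω, F j k ω ^ 2 ∂μ) := by
          exact Finset.sum_congr rfl fun k _ => hstep k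
      _ = (∫ ω, F j (n + 1) ω ^ 2 ∂μ) - ∫ ω, F j 0 ω ^ 2 ∂μ :=
          Finset.sum_range_sub (fun k => ∫ ω, F j k ω ^ 2 ∂μ) (n + 1)
      _ = ∫ ω, (ξ j ω) ^ 2 ∂μ := by
          rw [hFtop j, hF0 j]; simp
  -- the sum and its martingale
  let S : Ω → ℝ := fun ω => ∑ j, ξ j ω
  have hSsum : S = ∑ j, ξ j := by funext ω; simp [S]
  have hS2 : MemLp S 2 μ := by
    rw [hSsum]; exact memLp_finsetSum' Finset.univ fun j _ => hL2 j
  have hSint : Integrable S μ := hS2.integrable one_le_two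
  let SG : ℕ → Ω → ℝ := fun k => μ[S | G k]
  have hSGtop : SG (n + 1) = S := by
    refine condExp_of_stronglyMeasurable (hGle (n + 1)) ?_ hSint
    exact (Finset.measurable_sum Finset.univ fun j _ =>
      ((hmeas j).mono (hHtop j) le_rfl)).stronglyMeasurable
  have hSG0 : SG 0 = fun _ => (0 : ℝ) := by
    show μ[S | G 0] = _
    rw [hG0, condExp_bot]
    have : ∫ ω, S ω ∂μ = 0 := by
      rw [show (fun ω => ∑ j, ξ j ω) = S from rfl]
      calc ∫ ω, S ω ∂μ = ∑ j, ∫ ω, ξ j ω ∂μ := integral_finset_sum _ fun j _ => hξint j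
        _ = 0 := by simp [hcent]
    rw [this]
  let D : ℕ → Ω → ℝ := fun k ω => SG (k + 1) ω - SG k ω
  have hSG2 : ∀ k, MemLp (SG k) 2 μ := fun k => aux_memL2_condexp (hGle k) hS2
  have hD2 : ∀ k, MemLp (D k) 2 μ := fun k => (hSG2 (k + 1)).sub (hSG2 k)
  have htele : ∀ ω, S ω = ∑ k ∈ Finset.range (n + 1), D k ω := by
    intro ω
    have h := Finset.sum_range_sub (fun k => SG k ω) (n + 1)
    rw [show (∑ k ∈ Finset.range (n+1), D k ω)
        = ∑ k ∈ Finset.range (n+1), (SG (k+1) ω - SG k ω) from rfl, h, hSGtop, hSG0]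
    simp
  -- orthogonality of increments
  have horthD : ∀ k l, k < l → ∫ ω, D k ω * D l ω ∂μ = 0 := by
    intro k l hkl
    have hmeasDk : StronglyMeasurable[G l] (D k) := by
      have h1 : StronglyMeasurable[G (k + 1)] (SG (k + 1)) := stronglyMeasurable_condExp
      have h2 : StronglyMeasurable[G (k + 1)] (SG k) :=
        stronglyMeasurable_condExp.mono (hGmono (Nat.le_succ k))
      exact ((h1.sub h2).mono (hGmono hkl))
    exact aux_orth (hGmono (Nat.le_succ l)) (hGle (l + 1)) hmeasDk (hD2 k) hS2
  -- expansion of the square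
  have hexp : ∫ ω, (S ω) ^ 2 ∂μ
      = ∑ k ∈ Finset.range (n + 1), ∫ ω, (D k ω) ^ 2 ∂μ := by
    have hint : ∀ k l : ℕ, Integrable (fun ω => D k ω * D l ω) μ :=
      fun k l => aux_mul_integrable (hD2 k) (hD2 l)
    calc ∫ ω, (S ω) ^ 2 ∂μ
        = ∫ ω, ∑ k ∈ Finset.range (n + 1), ∑ l ∈ Finset.range (n + 1),
            D k ω * D l ω ∂μ := by
          congr 1; funext ω
          rw [htele ω, sq, Finset.sum_mul_sum]
      _ = ∑ k ∈ Finset.range (n + 1), ∫ ω, ∑ l ∈ Finset.range (n + 1),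
            D k ω * D l ω ∂μ :=
          integral_finset_sum _ fun k _ => integrable_finset_sum _ fun l _ => hint k l
      _ = ∑ k ∈ Finset.range (n + 1), ∑ l ∈ Finset.range (n + 1),
            ∫ ω, D k ω * D l ω ∂μ :=
          Finset.sum_congr rfl fun k _ => integral_finset_sum _ fun l _ => hint k l
      _ = ∑ k ∈ Finset.range (n + 1), ∫ ω, (D k ω) ^ 2 ∂μ := by
          refine Finset.sum_congr rfl fun k hk => ?_
          rw [Finset.sum_eq_single k]
          · congr 1; funext ω; rw [sq]
          · intro l _ hlk
            rcases lt_or_gt_of_ne hlk with h | h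
            · rw [show (fun ω => D k ω * D l ω) = fun ω => D l ω * D k ω from
                funext fun ω => mul_comm _ _]
              exact horthD l k h
            · exact horthD k l h
          · intro hk'
            exact absurd hk hk'
  -- per-k Cauchy-Schwarz bound
  have hDk : ∀ k ∈ Finset.range (n + 1), ∫ ω, (D k ω) ^ 2 ∂μ
      ≤ (n : ℝ) * ∑ j : Fin (n + 1), ∫ ω, (F j (k + 1) ω - F j k ω) ^ 2 ∂μ := by
    intro k hk
    have hkn : k < n + 1 := Finset.mem_range.mp hk
    set kF : Fin (n + 1) := ⟨k, hkn⟩ with hkF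
    have hcond : ∀ m : ℕ, μ[S|G m] =ᵐ[μ] fun ω => ∑ j, F j m ω := by
      intro m
      have h := condExp_finsetSum
        (fun (j : Fin (n + 1)) (_ : j ∈ Finset.univ) => hξint j) (m := G m)
      rw [← hSsum] at h
      refine h.trans (Filter.Eventually.of_forall fun ω => ?_)
      simp [F, Finset.sum_apply]
    have hdropk : F kF (k + 1) =ᵐ[μ] F kF k := hdrop kF
    have h1 : D k =ᵐ[μ] fun ω => ∑ j ∈ Finset.univ.erase kF, (F j (k + 1) ω - F j k ω) := by
      filter_upwards [hcond (k + 1), hcond k, hdropk] with ω e1 e2 e3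
      have hD : D k ω = ∑ j, F j (k + 1) ω - ∑ j, F j k ω := by
        show (μ[S|G (k + 1)]) ω - (μ[S|G k]) ω = _
        rw [e1, e2]
      rw [hD, ← Finset.sum_sub_distrib,
        ← Finset.add_sum_erase _ (fun j => F j (k + 1) ω - F j k ω) (Finset.mem_univ kF),
        e3, sub_self, zero_add]
    have hint_sq : ∀ j : Fin (n + 1),
        Integrable (fun ω => (F j (k + 1) ω - F j k ω) ^ 2) μ :=
      fun j => ((hF2 j (k + 1)).sub (hF2 j k)).integrable_sq
    have hL2erase : MemLp (fun ω => ∑ j ∈ Finset.univ.erase kF,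
        (F j (k + 1) ω - F j k ω)) 2 μ :=
      memLp_finsetSum _ fun j _ => (hF2 j (k + 1)).sub (hF2 j k)
    have hcard : ((Finset.univ.erase kF).card : ℝ) = n := by
      rw [Finset.card_erase_of_mem (Finset.mem_univ kF), Finset.card_univ, Fintype.card_fin]
      simp
    have hptwise : ∀ ω, (∑ j ∈ Finset.univ.erase kF, (F j (k + 1) ω - F j k ω)) ^ 2
        ≤ (n : ℝ) * ∑ j ∈ Finset.univ.erase kF, (F j (k + 1) ω - F j k ω) ^ 2 := by
      intro ω
      have h := sq_sum_le_card_mul_sum_sq (s := Finset.univ.erase kF)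
        (f := fun j => F j (k + 1) ω - F j k ω)
      rwa [hcard] at h
    calc ∫ ω, (D k ω) ^ 2 ∂μ
        = ∫ ω, (∑ j ∈ Finset.univ.erase kF, (F j (k + 1) ω - F j k ω)) ^ 2 ∂μ :=
          integral_congr_ae (h1.mono fun ω h => by
            show (D k ω) ^ 2 = _
            rw [h])
      _ ≤ ∫ ω, (n : ℝ) * ∑ j ∈ Finset.univ.erase kF, (F j (k + 1) ω - F j k ω) ^ 2 ∂μ :=
          integral_mono hL2erase.integrable_sq
            ((integrable_finset_sum _ fun j _ => hint_sq j).const_mul _)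
            (fun ω => hptwise ω)
      _ = (n : ℝ) * ∑ j ∈ Finset.univ.erase kF, ∫ ω, (F j (k + 1) ω - F j k ω) ^ 2 ∂μ := by
          rw [integral_const_mul, integral_finset_sum _ fun j _ => hint_sq j]
      _ ≤ (n : ℝ) * ∑ j : Fin (n + 1), ∫ ω, (F j (k + 1) ω - F j k ω) ^ 2 ∂μ := by
          refine mul_le_mul_of_nonneg_left ?_ (Nat.cast_nonneg n)
          exact Finset.sum_le_sum_of_subset_of_nonneg (Finset.subset_univ _)
            (fun j _ _ => integral_nonneg fun ω => sq_nonneg _)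
  -- final assembly
  show ∫ ω, (S ω) ^ 2 ∂μ ≤ (n : ℝ) * ∑ j, ∫ ω, (ξ j ω) ^ 2 ∂μ
  rw [hexp]
  calc ∑ k ∈ Finset.range (n + 1), ∫ ω, (D k ω) ^ 2 ∂μ
      ≤ ∑ k ∈ Finset.range (n + 1),
          (n : ℝ) * ∑ j : Fin (n + 1), ∫ ω, (F j (k + 1) ω - F j k ω) ^ 2 ∂μ :=
        Finset.sum_le_sum hDk
    _ = (n : ℝ) * ∑ j : Fin (n + 1), ∑ k ∈ Finset.range (n + 1),
          ∫ ω, (F j (k + 1) ω - F j k ω) ^ 2 ∂μ := by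
        rw [← Finset.mul_sum, Finset.sum_comm]
    _ = (n : ℝ) * ∑ j, ∫ ω, (ξ j ω) ^ 2 ∂μ := by
        rw [Finset.sum_congr rfl fun j _ => hCj j]
end

section
/- Let X_1, ..., X_m be mutually independent real random variables on a probability space (Ω, P), and for each j let F_j = σ(X_i : i ≠ j). Then for every integrable random variable f that is measurable with respect to σ(X_1, ..., X_m) and for all indices j, k, the iterated conditional expectations commute: E[E[f | F_j] | F_k] = E[E[f | F_k] | F_j] almost surely. -/
open MeasureTheory ProbabilityTheory

/-- The sup of two σ-algebras is generated by the π-system of intersections. -/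
lemma sup_eq_generateFrom_inter' {Ω : Type*} (G H : MeasurableSpace Ω) :
    G ⊔ H = MeasurableSpace.generateFrom
      {s | ∃ A B, MeasurableSet[G] A ∧ MeasurableSet[H] B ∧ s = A ∩ B} := by
  apply le_antisymm
  · refine sup_le ?_ ?_
    · intro s hs
      exact MeasurableSpace.measurableSet_generateFrom
        ⟨s, Set.univ, hs, MeasurableSet.univ, by simp⟩
    · intro s hs
      exact MeasurableSpace.measurableSet_generateFrom
        ⟨Set.univ, s, MeasurableSet.univ, hs, by simp⟩
  · refine MeasurableSpace.generateFrom_le ?_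
    rintro s ⟨A, B, hA, hB, rfl⟩
    exact ((le_sup_left : G ≤ G ⊔ H) _ hA).inter ((le_sup_right : H ≤ G ⊔ H) _ hB)

lemma isPiSystem_inter_sets' {Ω : Type*} (G H : MeasurableSpace Ω) :
    IsPiSystem {s : Set Ω | ∃ A B, MeasurableSet[G] A ∧ MeasurableSet[H] B ∧ s = A ∩ B} := by
  rintro s ⟨A₁, B₁, hA₁, hB₁, rfl⟩ t ⟨A₂, B₂, hA₂, hB₂, rfl⟩ -
  exact ⟨A₁ ∩ A₂, B₁ ∩ B₂, hA₁.inter hA₂, hB₁.inter hB₂, by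
    ext x; simp [Set.mem_inter_iff]; tauto⟩

/-- For an `mg`-strongly measurable integrable `h` and `A ∈ mg`, `B ∈ H` with `mg ⟂ H`,
the integral over `A ∩ B` factorizes. -/
lemma setIntegral_inter_indep' {Ω : Type*} {mg H : MeasurableSpace Ω}
    [m0 : MeasurableSpace Ω] {μ : Measure Ω}
    [IsProbabilityMeasure μ] (hmg : mg ≤ m0) (hH : H ≤ m0)
    (hindep : ProbabilityTheory.Indep mg H μ) {h : Ω → ℝ}
    (hh : StronglyMeasurable[mg] h) (hhint : Integrable h μ)
    {A B : Set Ω} (hA : MeasurableSet[mg] A) (hB : MeasurableSet[H] B) :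
    ∫ x in A ∩ B, h x ∂μ = (μ B).toReal * ∫ x in A, h x ∂μ := by
  have hA0 : MeasurableSet[m0] A := hmg _ hA
  have hB0 : MeasurableSet[m0] B := hH _ hB
  have hIF : ProbabilityTheory.IndepFun (A.indicator h) (B.indicator (fun _ => (1 : ℝ))) μ := by
    rw [ProbabilityTheory.IndepFun_iff_Indep]
    refine ProbabilityTheory.indep_of_indep_of_le_left
      (ProbabilityTheory.indep_of_indep_of_le_right hindep ?_) ?_
    · exact (Measurable.indicator (measurable_const) hB).comap_le
    · exact (Measurable.indicator (hh.measurable) hA).comap_le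
  have hprod : (A ∩ B).indicator h
      = A.indicator h * B.indicator (fun _ => (1 : ℝ)) := by
    funext x
    by_cases hx : x ∈ A <;> by_cases hx' : x ∈ B <;>
      simp [Set.indicator, hx, hx', Set.mem_inter_iff]
  have h1 : ∫ x in A ∩ B, h x ∂μ = ∫ x, (A ∩ B).indicator h x ∂μ :=
    (integral_indicator (hA0.inter hB0)).symm
  rw [h1, hprod, ProbabilityTheory.IndepFun.integral_mul_eq_mul_integral hIF (hhint.indicator hA0).aestronglyMeasurable
    ((integrable_const (1 : ℝ)).indicator hB0).aestronglyMeasurable]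
  rw [integral_indicator hA0, integral_indicator hB0]
  simp [mul_comm, measureReal_def]

/-- If `g` is `mg`-strongly measurable and integrable, `G ≤ mg`, and `H` is independent
of `mg`, then conditioning on `G ⊔ H` is the same as conditioning on `G`. -/
lemma condexp_sup_of_indep' {Ω : Type*} {G H mg : MeasurableSpace Ω}
    [m0 : MeasurableSpace Ω] {μ : Measure Ω}
    [IsProbabilityMeasure μ] (hGmg : G ≤ mg) (hmg : mg ≤ m0)
    (hH : H ≤ m0) (hindep : ProbabilityTheory.Indep mg H μ) {g : Ω → ℝ}
    (hg : StronglyMeasurable[mg] g) (hgint : Integrable g μ) :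
    μ[g | G ⊔ H] =ᵐ[μ] μ[g | G] := by
  have hG : G ≤ m0 := hGmg.trans hmg
  have hGH : G ⊔ H ≤ m0 := sup_le hG hH
  -- the key set-integral identity, by π-system induction
  have key : ∀ s : Set Ω, MeasurableSet[G ⊔ H] s →
      ∫ x in s, (μ[g | G]) x ∂μ = ∫ x in s, g x ∂μ := by
    intro s hs
    refine MeasurableSpace.induction_on_inter (m := G ⊔ H)
      (C := fun t _ => ∫ x in t, (μ[g | G]) x ∂μ = ∫ x in t, g x ∂μ)
      (sup_eq_generateFrom_inter' G H) (isPiSystem_inter_sets' G H) (by simp) ?_ ?_ ?_ _ hs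
    · rintro t ⟨A, B, hA, hB, rfl⟩
      rw [setIntegral_inter_indep' hmg hH hindep hg hgint (hGmg _ hA) hB,
        setIntegral_inter_indep' hmg hH hindep
          (stronglyMeasurable_condExp.mono hGmg) integrable_condExp (hGmg _ hA) hB,
        setIntegral_condExp hG hgint hA]
    · intro t ht hCt
      rw [setIntegral_compl (hGH _ ht) integrable_condExp,
        setIntegral_compl (hGH _ ht) hgint, hCt, integral_condExp hG]
    · intro f hdisj hmeas hC
      rw [integral_iUnion (fun i => hGH _ (hmeas i)) hdisj integrable_condExp.integrableOn,
        integral_iUnion (fun i => hGH _ (hmeas i)) hdisj hgint.integrableOn]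
      exact tsum_congr hC
  refine (ae_eq_condExp_of_forall_setIntegral_eq hGH hgint
    (fun s _ _ => integrable_condExp.integrableOn) (fun s hs _ => key s hs)
    ((stronglyMeasurable_condExp.mono (le_sup_left : G ≤ G ⊔ H)).aestronglyMeasurable)).symm

/-- The σ-algebra generated by all the `X i` with `i ∉ {j, k}`. -/
def sigmaExceptTwo {Ω : Type*} {m : ℕ} (X : Fin m → Ω → ℝ) (j k : Fin m) :
    MeasurableSpace Ω :=
  ⨆ i ∈ {i : Fin m | i ≠ j ∧ i ≠ k}, MeasurableSpace.comap (X i) inferInstance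

/-- For mutually independent real random variables `X 0, …, X (m-1)` and
`F j = σ(X i : i ≠ j)`, the conditional expectations onto the `F j` commute on integrable
random variables that are measurable with respect to `σ(X 0, …, X (m-1))`. -/
theorem condexp_commute_of_indep
    {Ω : Type*} [MeasurableSpace Ω] (μ : Measure Ω) [IsProbabilityMeasure μ]
    {m : ℕ} (X : Fin m → Ω → ℝ) (hX : ∀ i, Measurable (X i))
    (hindep : iIndepFun X μ)
    (F : Fin m → MeasurableSpace Ω)
    (hF : ∀ j, F j = ⨆ i ∈ {i | i ≠ j}, MeasurableSpace.comap (X i) inferInstance)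
    (f : Ω → ℝ) (hfint : Integrable f μ)
    (hfmeas : Measurable[⨆ i, MeasurableSpace.comap (X i) inferInstance] f)
    (j k : Fin m) :
    μ[μ[f | F j] | F k] =ᵐ[μ] μ[μ[f | F k] | F j] := by
  by_cases hjk : j = k
  · subst hjk; exact Filter.EventuallyEq.rfl
  have hiI : ProbabilityTheory.iIndep
      (fun i => MeasurableSpace.comap (X i) inferInstance) μ :=
    (ProbabilityTheory.iIndepFun_iff_iIndep _ _ _).mp hindep
  have hcomap_le : ∀ i, MeasurableSpace.comap (X i) inferInstance ≤ ‹MeasurableSpace Ω› :=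
    fun i => (hX i).comap_le
  have hle : ∀ s : Set (Fin m),
      (⨆ i ∈ s, MeasurableSpace.comap (X i) inferInstance) ≤ ‹MeasurableSpace Ω› :=
    fun s => iSup₂_le fun i _ => hcomap_le i
  have hFj_le : F j ≤ ‹MeasurableSpace Ω› := by rw [hF j]; exact hle _
  have hFk_le : F k ≤ ‹MeasurableSpace Ω› := by rw [hF k]; exact hle _
  have hsingle : ∀ i : Fin m,
      (⨆ i' ∈ ({i} : Set (Fin m)), MeasurableSpace.comap (X i') inferInstance)
        = MeasurableSpace.comap (X i) inferInstance := by
    intro i; simp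
  -- decompositions of F j and F k
  have hFj : F j = sigmaExceptTwo X j k ⊔ MeasurableSpace.comap (X k) inferInstance := by
    rw [hF j]
    have hset : {i : Fin m | i ≠ j} = {i : Fin m | i ≠ j ∧ i ≠ k} ∪ {k} := by
      ext i
      simp only [Set.mem_setOf_eq, Set.mem_union, Set.mem_singleton_iff]
      constructor
      · intro hi; by_cases h : i = k
        · exact Or.inr h
        · exact Or.inl ⟨hi, h⟩
      · rintro (⟨hi, -⟩ | rfl)
        · exact hi
        · exact fun h => hjk h.symm
    rw [hset, iSup_union, hsingle k]; rfl
  have hFk : F k = sigmaExceptTwo X j k ⊔ MeasurableSpace.comap (X j) inferInstance := by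
    rw [hF k]
    have hset : {i : Fin m | i ≠ k} = {i : Fin m | i ≠ j ∧ i ≠ k} ∪ {j} := by
      ext i
      simp only [Set.mem_setOf_eq, Set.mem_union, Set.mem_singleton_iff]
      constructor
      · intro hi; by_cases h : i = j
        · exact Or.inr h
        · exact Or.inl ⟨h, hi⟩
      · rintro (⟨-, hi⟩ | rfl)
        · exact hi
        · exact hjk
    rw [hset, iSup_union, hsingle j]; rfl
  -- independence of F j and σ(X j), resp. F k and σ(X k)
  have hindepFj : ProbabilityTheory.Indep (F j)
      (MeasurableSpace.comap (X j) inferInstance) μ := by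
    have := ProbabilityTheory.indep_iSup_of_disjoint hcomap_le hiI
      (S := {i : Fin m | i ≠ j}) (T := {j}) (by simp [Set.disjoint_left])
    rwa [hsingle j, ← hF j] at this
  have hindepFk : ProbabilityTheory.Indep (F k)
      (MeasurableSpace.comap (X k) inferInstance) μ := by
    have := ProbabilityTheory.indep_iSup_of_disjoint hcomap_le hiI
      (S := {i : Fin m | i ≠ k}) (T := {k}) (by simp [Set.disjoint_left])
    rwa [hsingle k, ← hF k] at this
  have hGFj : sigmaExceptTwo X j k ≤ F j := by rw [hFj]; exact le_sup_left
  have hGFk : sigmaExceptTwo X j k ≤ F k := by rw [hFk]; exact le_sup_left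
  -- both sides are a.e. equal to μ[f | sigmaExceptTwo X j k]
  have h1 : μ[μ[f | F j] | F k] =ᵐ[μ] μ[f | sigmaExceptTwo X j k] := by
    have e1 : μ[μ[f | F j] | F k]
        = μ[μ[f | F j] | sigmaExceptTwo X j k
            ⊔ MeasurableSpace.comap (X j) inferInstance] := by rw [hFk]
    rw [e1]
    refine (condexp_sup_of_indep' hGFj hFj_le (hcomap_le j) hindepFj
      stronglyMeasurable_condExp integrable_condExp).trans ?_
    exact condExp_condExp_of_le hGFj hFj_le
  have h2 : μ[μ[f | F k] | F j] =ᵐ[μ] μ[f | sigmaExceptTwo X j k] := by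
    have e2 : μ[μ[f | F k] | F j]
        = μ[μ[f | F k] | sigmaExceptTwo X j k
            ⊔ MeasurableSpace.comap (X k) inferInstance] := by rw [hFj]
    rw [e2]
    refine (condexp_sup_of_indep' hGFk hFk_le (hcomap_le k) hindepFk
      stronglyMeasurable_condExp integrable_condExp).trans ?_
    exact condExp_condExp_of_le hGFk hFk_le
  exact h1.trans h2.symm
end

section
/- Let X_1, ..., X_m be mutually independent real random variables on a probability space (Ω, P), and for each j let F_j = σ(X_i : i ≠ j). Then for every integrable random variable f that is measurable with respect to σ(X_1, ..., X_m), the composition of all the conditional expectations gives the expectation: (E[· | F_1] ∘ E[· | F_2] ∘ ... ∘ E[· | F_m])(f) = E[f] almost surely. -/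
open MeasureTheory ProbabilityTheory

/-- Auxiliary: conditional expectation w.r.t. a sup with an independent σ-algebra. -/
lemma condexp_sup_indep_aux {Ω : Type*} {m₁ m₂ m₃ : MeasurableSpace Ω} [m0 : MeasurableSpace Ω] {μ : Measure Ω}
    [IsProbabilityMeasure μ]
    (h2 : m₂ ≤ m0) (h3 : m₃ ≤ m0) (h13 : m₁ ≤ m₃)
    {g : Ω → ℝ} (hg : StronglyMeasurable[m₃] g) (hgint : Integrable g μ)
    (hindep : Indep m₃ m₂ μ) :
    μ[g | m₁ ⊔ m₂] =ᵐ[μ] μ[g | m₁] := by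
  have h1 : m₁ ≤ m0 := h13.trans h3
  have hm : m₁ ⊔ m₂ ≤ m0 := sup_le h1 h2
  set h : Ω → ℝ := μ[g | m₁] with hh
  have hhsm : StronglyMeasurable[m₁] h := stronglyMeasurable_condExp
  have hhint : Integrable h μ := integrable_condExp
  -- product formula
  have prod_eq : ∀ (u : Ω → ℝ), StronglyMeasurable[m₃] u → Integrable u μ →
      ∀ B, MeasurableSet[m₂] B → ∫ x in B, u x ∂μ = (∫ x, u x ∂μ) * (μ B).toReal := by
    intro u hu huint B hB
    have hBind : Measurable[m₂] (B.indicator (fun _ => (1:ℝ))) :=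
      measurable_const.indicator hB
    have hIF : IndepFun u (B.indicator (fun _ => (1:ℝ))) μ := by
      rw [IndepFun_iff_Indep]
      exact indep_of_indep_of_le_right (indep_of_indep_of_le_left hindep hu.measurable.comap_le)
        hBind.comap_le
    have : ∫ x in B, u x ∂μ = integral μ (u * B.indicator (fun _ => (1:ℝ))) := by
      rw [← integral_indicator (h2 B hB)]
      congr 1; ext x
      by_cases hx : x ∈ B <;> simp [hx]
    rw [this, hIF.integral_mul_eq_mul_integral (hu.mono h3).aestronglyMeasurable
      ((hBind.mono h2 le_rfl).stronglyMeasurable.aestronglyMeasurable),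
      integral_indicator (h2 B hB)]
    simp [measureReal_def]
  -- set-integral equality on the π-system and beyond
  have main : ∀ s, MeasurableSet[m₁ ⊔ m₂] s → ∫ x in s, h x ∂μ = ∫ x in s, g x ∂μ := by
    set P : Set (Set Ω) :=
      {s | ∃ A B, MeasurableSet[m₁] A ∧ MeasurableSet[m₂] B ∧ s = A ∩ B} with hP
    have hgen : (m₁ ⊔ m₂) = MeasurableSpace.generateFrom P := by
      refine le_antisymm (sup_le ?_ ?_) (MeasurableSpace.generateFrom_le ?_)
      · intro A hA
        exact MeasurableSpace.measurableSet_generateFrom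
          ⟨A, Set.univ, hA, MeasurableSet.univ, (Set.inter_univ A).symm⟩
      · intro B hB
        exact MeasurableSpace.measurableSet_generateFrom
          ⟨Set.univ, B, MeasurableSet.univ, hB, (Set.univ_inter B).symm⟩
      · rintro s ⟨A, B, hA, hB, rfl⟩
        exact MeasurableSet.inter (le_sup_left (α := MeasurableSpace Ω) A hA)
          (le_sup_right (α := MeasurableSpace Ω) B hB)
    have hpi : IsPiSystem P := by
      rintro s ⟨A, B, hA, hB, rfl⟩ t ⟨A', B', hA', hB', rfl⟩ -
      exact ⟨A ∩ A', B ∩ B', hA.inter hA', hB.inter hB', by ext x; simp; tauto⟩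
    have hbasic : ∀ t ∈ P, ∫ x in t, h x ∂μ = ∫ x in t, g x ∂μ := by
      rintro t ⟨A, B, hA, hB, rfl⟩
      have split : ∀ (u : Ω → ℝ), ∫ x in A ∩ B, u x ∂μ = ∫ x in B, A.indicator u x ∂μ := by
        intro u
        rw [← integral_indicator (h1 A hA |>.inter (h2 B hB)),
          ← integral_indicator (h2 B hB)]
        congr 1; ext x
        by_cases hxA : x ∈ A <;> by_cases hxB : x ∈ B <;> simp [hxA, hxB]
      have hAg : StronglyMeasurable[m₃] (A.indicator g) := hg.indicator (h13 A hA)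
      have hAh : StronglyMeasurable[m₃] (A.indicator h) := (hhsm.mono h13).indicator (h13 A hA)
      rw [split g, split h,
        prod_eq _ hAg (hgint.indicator (h1 A hA)) B hB,
        prod_eq _ hAh (hhint.indicator (h1 A hA)) B hB,
        integral_indicator (h1 A hA), integral_indicator (h1 A hA),
        setIntegral_condExp h1 hgint hA]
    intro s hs
    refine MeasurableSpace.induction_on_inter (m := m₁ ⊔ m₂)
      (C := fun s _ => ∫ x in s, h x ∂μ = ∫ x in s, g x ∂μ) hgen hpi ?_ hbasic ?_ ?_ s hs
    · simp
    · intro t ht hteq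
      have ht0 : MeasurableSet t := hm t ht
      have h1' := integral_add_compl ht0 hhint
      have h2' := integral_add_compl ht0 hgint
      have hInt : ∫ x, h x ∂μ = ∫ x, g x ∂μ := integral_condExp h1
      linarith
    · intro u hdisj humeas heq
      rw [integral_iUnion (fun i => hm _ (humeas i)) hdisj hhint.integrableOn,
        integral_iUnion (fun i => hm _ (humeas i)) hdisj hgint.integrableOn]
      exact tsum_congr heq
  exact (ae_eq_condExp_of_forall_setIntegral_eq hm hgint
    (fun s _ _ => hhint.integrableOn) (fun s hs _ => main s hs)
    ((StronglyMeasurable.aestronglyMeasurable (μ := μ) (hhsm.mono (le_sup_left (b := m₂)))))).symm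

/-- For mutually independent real random variables `X 0, …, X (m-1)` and
`F j = σ(X i : i ≠ j)`, the composition `E[·|F 0] ∘ E[·|F 1] ∘ ⋯ ∘ E[·|F (m-1)]` applied to an
integrable, `σ(X 0, …, X (m-1))`-measurable random variable `f` equals `E[f]` a.s. -/
theorem condexp_comp_eq_integral_of_indep
    {Ω : Type*} [MeasurableSpace Ω] (μ : Measure Ω) [IsProbabilityMeasure μ]
    {m : ℕ} (X : Fin m → Ω → ℝ) (hX : ∀ i, Measurable (X i))
    (hindep : iIndepFun X μ)
    (F : Fin m → MeasurableSpace Ω)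
    (hF : ∀ j, F j = ⨆ i ∈ {i | i ≠ j}, MeasurableSpace.comap (X i) inferInstance)
    (f : Ω → ℝ) (hfint : Integrable f μ)
    (hfmeas : Measurable[⨆ i, MeasurableSpace.comap (X i) inferInstance] f) :
    (List.ofFn (fun j => fun g : Ω → ℝ => μ[g | F j])).foldr (· ∘ ·) id f
      =ᵐ[μ] fun _ => ∫ ω, f ω ∂μ := by
    classical
  let m0 : MeasurableSpace Ω := ‹_›
  let Mi : Fin m → MeasurableSpace Ω := fun i => MeasurableSpace.comap (X i) inferInstance
  have hMile : ∀ i, Mi i ≤ m0 := fun i => (hX i).comap_le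
  let G : ℕ → MeasurableSpace Ω := fun k => ⨆ i ∈ {i : Fin m | (i : ℕ) < k}, Mi i
  have hGle : ∀ k, G k ≤ m0 := fun k => iSup₂_le fun i _ => hMile i
  have hGmono : ∀ k, G k ≤ G (k + 1) :=
    fun k => iSup₂_le fun i hi => le_iSup₂ (f := fun i _ => Mi i) i (Nat.lt_succ_of_lt hi)
  have hiIndep : iIndep Mi μ := (iIndepFun_iff_iIndep _ _ _).mp hindep
  have hHle : ∀ k : ℕ, (⨆ i ∈ {i : Fin m | k < (i : ℕ)}, Mi i) ≤ m0 :=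
    fun k => iSup₂_le fun i _ => hMile i
  have hIndepStep : ∀ k : ℕ, Indep (G (k + 1)) (⨆ i ∈ {i : Fin m | k < (i : ℕ)}, Mi i) μ := by
    intro k
    refine indep_iSup_of_disjoint hMile hiIndep ?_
    rw [Set.disjoint_left]
    intro i hi hj
    simp only [Set.mem_setOf_eq] at hi hj
    omega
  have hFsplit : ∀ j : Fin m,
      F j = G (j : ℕ) ⊔ (⨆ i ∈ {i : Fin m | (j : ℕ) < (i : ℕ)}, Mi i) := by
    intro j
    rw [hF j]
    apply le_antisymm
    · refine iSup_le fun i => iSup_le fun hi => ?_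
      have hne : (i : ℕ) ≠ (j : ℕ) := fun e => hi (Fin.ext e)
      rcases lt_or_gt_of_ne hne with h | h
      · exact le_trans (le_iSup₂ (f := fun i _ => Mi i) i h) le_sup_left
      · exact le_trans (le_iSup₂ (f := fun i _ => Mi i) i h) le_sup_right
    · refine sup_le (iSup₂_le fun i hi => ?_) (iSup₂_le fun i hi => ?_)
      · exact le_iSup₂ (f := fun i _ => MeasurableSpace.comap (X i) inferInstance) i
          (show i ≠ j from fun e => by subst e; exact Nat.lt_irrefl _ hi)
      · exact le_iSup₂ (f := fun i _ => MeasurableSpace.comap (X i) inferInstance) i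
          (show i ≠ j from fun e => by subst e; exact Nat.lt_irrefl _ hi)
  have hGm : (⨆ i, Mi i) = G m :=
    le_antisymm (iSup_le fun i => le_iSup₂ (f := fun i _ => Mi i) i i.isLt)
      (iSup₂_le fun i _ => le_iSup Mi i)
  have hfsm : StronglyMeasurable[G m] f :=
    (hfmeas.mono (le_of_eq hGm) le_rfl).stronglyMeasurable
  -- foldr with arbitrary initial function
  have comp_init : ∀ (l : List ((Ω → ℝ) → (Ω → ℝ))) (b : (Ω → ℝ) → (Ω → ℝ)),
      l.foldr (· ∘ ·) b = (l.foldr (· ∘ ·) id) ∘ b := by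
    intro l
    induction l with
    | nil => intro b; rfl
    | cons a l ih =>
      intro b
      simp only [List.foldr_cons, ih b, Function.comp_assoc]
  have key : ∀ n (hn : n ≤ m) (g : Ω → ℝ), g =ᵐ[μ] μ[f | G n] →
      (List.ofFn (fun j : Fin n => fun g : Ω → ℝ => μ[g | F (Fin.castLE hn j)])).foldr
        (· ∘ ·) id g =ᵐ[μ] fun _ => ∫ ω, f ω ∂μ := by
    intro n
    induction n with
    | zero =>
      intro hn g hg
      simp only [List.ofFn_zero, List.foldr_nil, id_eq]
      have hG0 : G 0 = ⊥ :=
        le_antisymm (iSup₂_le fun i hi => absurd hi (Nat.not_lt_zero _)) bot_le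
      refine hg.trans ?_
      rw [hG0, condExp_bot]
    | succ n ih =>
      intro hn g hg
      have hn' : n ≤ m := Nat.le_of_succ_le hn
      have hlist : (List.ofFn (fun j : Fin (n + 1) => fun g : Ω → ℝ => μ[g | F (Fin.castLE hn j)]))
          = (List.ofFn (fun j : Fin n => fun g : Ω → ℝ => μ[g | F (Fin.castLE hn' j)]))
            ++ [fun g : Ω → ℝ => μ[g | F ⟨n, hn⟩]] := by
        have e1 : (fun (i : Fin n) (g : Ω → ℝ) => μ[g|F (Fin.castLE hn i.castSucc)])
            = (fun j g => μ[g|F (Fin.castLE hn' j)]) := by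
          funext i
          have e : Fin.castLE hn i.castSucc = Fin.castLE hn' i := Fin.ext rfl
          rw [e]
        have e2 : Fin.castLE hn (Fin.last n) = (⟨n, hn⟩ : Fin m) := Fin.ext rfl
        rw [List.ofFn_succ', List.concat_eq_append, e1, e2]
      rw [hlist, List.foldr_append]
      simp only [List.foldr_cons, List.foldr_nil]
      rw [comp_init]
      have hstep : μ[g | F ⟨n, hn⟩] =ᵐ[μ] μ[f | G n] := by
        have h1 : μ[g | F ⟨n, hn⟩] =ᵐ[μ] μ[μ[f | G (n + 1)] | F ⟨n, hn⟩] := condExp_congr_ae hg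
        have h2 : μ[μ[f | G (n + 1)] | F ⟨n, hn⟩] =ᵐ[μ] μ[μ[f | G (n + 1)] | G n] := by
          have := condexp_sup_indep_aux (m₁ := G n) (h2 := hHle n) (hGle (n + 1)) (hGmono n)
            (stronglyMeasurable_condExp (m := G (n + 1)) (f := f) (μ := μ))
            integrable_condExp (hIndepStep n)
          rw [hFsplit ⟨n, hn⟩]
          exact this
        have h3 : μ[μ[f | G (n + 1)] | G n] =ᵐ[μ] μ[f | G n] :=
          condExp_condExp_of_le (hGmono n) (hGle (n + 1))
        exact (h1.trans h2).trans h3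
      exact ih hn' _ hstep
  have hfeq : f =ᵐ[μ] μ[f | G m] := by
    rw [condExp_of_stronglyMeasurable (hGle m) hfsm hfint]
  have := key m le_rfl f hfeq
  simpa using this
end

section
/- Let X_1, ..., X_{n+1} be real random variables on a probability space (Ω, P), all of whose moments are finite (E[|X_i|^k] < ∞ for all i and all k). Let a_1, ..., a_{n+1} ∈ ℝ, fix an index k, set Y_k = Σ_{i≠k} a_i X_i and S = Σ_{i=1}^{n+1} a_i X_i. If ξ is a score of Y_k relative to X_k, then the conditional expectation E[ξ | σ(S)] is a score of S; that is, E[ E[ξ | σ(S)] · q(S) ] = E[q′(S)] for every polynomial q in one real variable. -/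
open MeasureTheory ProbabilityTheory

/-- A *score* of a real random variable `Y` on `(Ω, μ)`: a square-integrable
`σ(Y)`-measurable random variable `ξ` with `E[ξ·q(Y)] = E[q′(Y)]` for every
polynomial `q` in one real variable. -/
def IsScore {Ω : Type*} [MeasurableSpace Ω] (μ : Measure Ω) (Y ξ : Ω → ℝ) : Prop :=
  MemLp ξ 2 μ ∧ Measurable[MeasurableSpace.comap Y inferInstance] ξ ∧
    ∀ q : Polynomial ℝ,
      ∫ ω, ξ ω * q.eval (Y ω) ∂μ = ∫ ω, (Polynomial.derivative q).eval (Y ω) ∂μ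

/-- A *score of `Y` relative to `Z`*: a square-integrable `σ(Y, Z)`-measurable random
variable `ξ` with `E[ξ·p(Y,Z)] = E[(∂p/∂y)(Y,Z)]` for every polynomial `p` in two real
variables (variable `0` standing for `y`). -/
def IsRelScore {Ω : Type*} [MeasurableSpace Ω] (μ : Measure Ω) (Y Z ξ : Ω → ℝ) : Prop :=
  MemLp ξ 2 μ ∧
    Measurable[MeasurableSpace.comap (fun ω => (Y ω, Z ω)) inferInstance] ξ ∧
    ∀ p : MvPolynomial (Fin 2) ℝ,
      ∫ ω, ξ ω * MvPolynomial.eval ![Y ω, Z ω] p ∂μ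
        = ∫ ω, MvPolynomial.eval ![Y ω, Z ω] (MvPolynomial.pderiv 0 p) ∂μ

lemma sum_pow_le_card_pow_mul {ι : Type*} {s : Finset ι} (hs : s.Nonempty) (c : ι → ℝ)
    (hc : ∀ i ∈ s, 0 ≤ c i) (m : ℕ) :
    (∑ i ∈ s, c i) ^ m ≤ (s.card : ℝ) ^ m * ∑ i ∈ s, c i ^ m := by
  obtain ⟨i0, hi0, hM⟩ := Finset.exists_mem_eq_sup' hs c
  have h1 : ∑ i ∈ s, c i ≤ s.card * c i0 := by
    rw [← hM]
    calc ∑ i ∈ s, c i ≤ ∑ _i ∈ s, s.sup' hs c :=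
          Finset.sum_le_sum fun i hi => Finset.le_sup' c hi
      _ = s.card * s.sup' hs c := by rw [Finset.sum_const, nsmul_eq_mul]
  have h0 : 0 ≤ c i0 := hc i0 hi0
  calc (∑ i ∈ s, c i) ^ m ≤ ((s.card : ℝ) * c i0) ^ m :=
        pow_le_pow_left₀ (Finset.sum_nonneg hc) h1 m
    _ = (s.card : ℝ) ^ m * c i0 ^ m := mul_pow _ _ _
    _ ≤ (s.card : ℝ) ^ m * ∑ i ∈ s, c i ^ m := by
        apply mul_le_mul_of_nonneg_left _ (by positivity)
        exact Finset.single_le_sum (fun i hi => pow_nonneg (hc i hi) m) hi0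

lemma eval_aeval_poly (q : Polynomial ℝ) (w : MvPolynomial (Fin 2) ℝ) (v : Fin 2 → ℝ) :
    MvPolynomial.eval v (Polynomial.aeval w q) = q.eval (MvPolynomial.eval v w) := by
  induction q using Polynomial.induction_on' with
  | add p r hp hr => simp [hp, hr]
  | monomial n b => simp [Polynomial.aeval_monomial, MvPolynomial.algebraMap_eq]

lemma pderiv0_aeval (c : ℝ) (q : Polynomial ℝ) :
    MvPolynomial.pderiv (0 : Fin 2)
        (Polynomial.aeval (MvPolynomial.X 0 + MvPolynomial.C c * MvPolynomial.X 1) q)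
      = Polynomial.aeval (MvPolynomial.X (0 : Fin 2) + MvPolynomial.C c * MvPolynomial.X 1)
          (Polynomial.derivative q) := by
  set w : MvPolynomial (Fin 2) ℝ := MvPolynomial.X 0 + MvPolynomial.C c * MvPolynomial.X 1 with hw
  have hdw : MvPolynomial.pderiv (0 : Fin 2) w = 1 := by
    simp [hw, MvPolynomial.pderiv_X, Pi.single_apply]
  induction q using Polynomial.induction_on' with
  | add p r hp hr => simp [hp, hr]
  | monomial n b =>
    rw [Polynomial.aeval_monomial, Polynomial.derivative_monomial, Polynomial.aeval_monomial]
    rw [Derivation.leibniz, Derivation.leibniz_pow, hdw]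
    simp [MvPolynomial.algebraMap_eq, mul_comm, mul_assoc, mul_left_comm,
      MvPolynomial.C_mul, Nat.cast_smul_eq_nsmul]

lemma integrable_poly_comp {Ω : Type*} [MeasurableSpace Ω] {μ : Measure Ω}
    {S : Ω → ℝ} (hSm : Measurable S)
    (habs : ∀ m : ℕ, Integrable (fun ω => |S ω| ^ m) μ) (q : Polynomial ℝ) :
    Integrable (fun ω => q.eval (S ω)) μ := by
  induction q using Polynomial.induction_on' with
  | add p r hp hr => simp only [Polynomial.eval_add]; exact hp.add hr
  | monomial m b =>
    simp only [Polynomial.eval_monomial]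
    refine Integrable.const_mul ?_ b
    refine (habs m).mono' ((hSm.pow_const m).aestronglyMeasurable) ?_
    filter_upwards with ω
    rw [Real.norm_eq_abs, abs_pow]

lemma integrable_abs_pow_sum {Ω : Type*} [MeasurableSpace Ω] {μ : Measure Ω}
    [IsProbabilityMeasure μ] {n : ℕ} {X : Fin (n + 1) → Ω → ℝ} (hX : ∀ i, Measurable (X i))
    (hmom : ∀ i, ∀ m : ℕ, Integrable (fun ω => |X i ω| ^ m) μ)
    (a : Fin (n + 1) → ℝ) (m : ℕ) :
    Integrable (fun ω => |∑ i, a i * X i ω| ^ m) μ := by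
  have hSm : Measurable fun ω => ∑ i, a i * X i ω :=
    Finset.measurable_sum _ fun i _ => (hX i).const_mul (a i)
  have hg : Integrable (fun ω => ((n + 1 : ℕ) : ℝ) ^ m * ∑ i, |a i| ^ m * |X i ω| ^ m) μ := by
    refine Integrable.const_mul ?_ _
    exact integrable_finset_sum _ fun i _ => (hmom i m).const_mul _
  refine hg.mono' (hSm.abs.pow_const m).aestronglyMeasurable ?_
  filter_upwards with ω
  rw [Real.norm_eq_abs, abs_pow, abs_abs]
  calc |∑ i, a i * X i ω| ^ m ≤ (∑ i, |a i * X i ω|) ^ m := by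
        apply pow_le_pow_left₀ (abs_nonneg _)
        exact Finset.abs_sum_le_sum_abs _ _
    _ ≤ ((Finset.univ : Finset (Fin (n + 1))).card : ℝ) ^ m * ∑ i, |a i * X i ω| ^ m :=
        sum_pow_le_card_pow_mul Finset.univ_nonempty _ (fun i _ => abs_nonneg _) m
    _ = ((n + 1 : ℕ) : ℝ) ^ m * ∑ i, |a i| ^ m * |X i ω| ^ m := by
        simp [abs_mul, mul_pow]

/-- If `ξ` is a score of `Y k = ∑_{i ≠ k} a i • X i` relative to `X k`, then
the conditional expectation of `ξ` given `σ(S)`, where `S = ∑ i, a i • X i`, is a score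
of `S`. -/
theorem condexp_relScore_isScore_sum
    {Ω : Type*} [MeasurableSpace Ω] (μ : Measure Ω) [IsProbabilityMeasure μ]
    {n : ℕ} (X : Fin (n + 1) → Ω → ℝ) (hX : ∀ i, Measurable (X i))
    (hmom : ∀ i, ∀ m : ℕ, Integrable (fun ω => |X i ω| ^ m) μ)
    (a : Fin (n + 1) → ℝ) (k : Fin (n + 1))
    (Yk S : Ω → ℝ)
    (hYk : Yk = fun ω => ∑ i ∈ Finset.univ.filter (· ≠ k), a i * X i ω)
    (hS : S = fun ω => ∑ i, a i * X i ω)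
    (ξ : Ω → ℝ) (hξ : IsRelScore μ Yk (X k) ξ) :
    IsScore μ S (μ[ξ | MeasurableSpace.comap S inferInstance]) := by
  obtain ⟨hξ2, hξmeas, hξrel⟩ := hξ
  have hSm : Measurable S := by
    rw [hS]; exact Finset.measurable_sum _ fun i _ => (hX i).const_mul (a i)
  have hm := hSm.comap_le
  haveI : SigmaFinite (μ.trim hm) := inferInstance
  have hξint : Integrable ξ μ := hξ2.integrable one_le_two
  have hdecomp : ∀ ω, S ω = Yk ω + a k * X k ω := by
    intro ω
    rw [hS, hYk]
    simp only
    rw [Finset.filter_ne' Finset.univ k]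
    exact (Finset.sum_erase_add Finset.univ _ (Finset.mem_univ k)).symm
  have habs : ∀ N : ℕ, Integrable (fun ω => |S ω| ^ N) μ := by
    rw [hS]; exact integrable_abs_pow_sum hX hmom a
  have hpoly : ∀ q : Polynomial ℝ, Integrable (fun ω => q.eval (S ω)) μ :=
    integrable_poly_comp hSm habs
  have hpoly2 : ∀ q : Polynomial ℝ, MemLp (fun ω => q.eval (S ω)) 2 μ := by
    intro q
    refine (memLp_two_iff_integrable_sq
      (q.continuous.measurable.comp hSm).aestronglyMeasurable).2 ?_
    simpa [Polynomial.eval_mul, sq] using hpoly (q * q)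
  -- MemLp 2 of the conditional expectation
  have hcond_eq : (↑↑(condExpL2 ℝ ℝ hm (hξ2.toLp ξ)) : Ω → ℝ) =ᵐ[μ] μ[ξ|MeasurableSpace.comap S inferInstance] := by
    refine ae_eq_condExp_of_forall_setIntegral_eq hm hξint
      (fun s _ _ => (integrable_condExpL2_of_isFiniteMeasure hm).integrableOn)
      (fun s hs hμs => ?_) (aestronglyMeasurable_condExpL2 hm _)
    rw [integral_condExpL2_eq hm (hξ2.toLp ξ) hs hμs.ne]
    exact setIntegral_congr_ae (hm s hs) ((hξ2.coeFn_toLp).mono fun x hx _ => hx)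
  have h1 : MemLp (μ[ξ|MeasurableSpace.comap S inferInstance]) 2 μ := (Lp.memLp _).ae_eq hcond_eq
  refine ⟨h1, stronglyMeasurable_condExp.measurable, fun q => ?_⟩
  -- the polynomial p(y, z) = q(y + a k * z)
  set w : MvPolynomial (Fin 2) ℝ :=
    MvPolynomial.X 0 + MvPolynomial.C (a k) * MvPolynomial.X 1 with hwdef
  set p : MvPolynomial (Fin 2) ℝ := Polynomial.aeval w q with hpdef
  have hwev : ∀ ω, MvPolynomial.eval ![Yk ω, X k ω] w = S ω := by
    intro ω; simp [hwdef, hdecomp ω]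
  have hpev : ∀ ω, MvPolynomial.eval ![Yk ω, X k ω] p = q.eval (S ω) := by
    intro ω; rw [hpdef, eval_aeval_poly, hwev]
  have hGm : StronglyMeasurable[MeasurableSpace.comap S inferInstance] fun ω => q.eval (S ω) :=
    (q.continuous.measurable.comp (comap_measurable S)).stronglyMeasurable
  have hprod : Integrable ((fun ω => q.eval (S ω)) * ξ) μ := by
    have h := (hξ2.smul (hpoly2 q) (r := 1)).integrable le_rfl
    simpa [Pi.smul_apply', smul_eq_mul] using h
  have hmul := condExp_mul_of_stronglyMeasurable_left hGm hprod hξint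
  calc ∫ ω, (μ[ξ|MeasurableSpace.comap S inferInstance]) ω * q.eval (S ω) ∂μ
      = ∫ ω, ((fun ω => q.eval (S ω)) * μ[ξ|MeasurableSpace.comap S inferInstance]) ω ∂μ := by
        simp only [Pi.mul_apply]; simp_rw [mul_comm]
    _ = ∫ ω, (μ[(fun ω => q.eval (S ω)) * ξ|MeasurableSpace.comap S inferInstance]) ω ∂μ := (integral_congr_ae hmul).symm
    _ = ∫ ω, ((fun ω => q.eval (S ω)) * ξ) ω ∂μ := integral_condExp hm
    _ = ∫ ω, ξ ω * MvPolynomial.eval ![Yk ω, X k ω] p ∂μ := by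
        simp only [Pi.mul_apply]
        congr 1; funext ω; rw [hpev ω, mul_comm]
    _ = ∫ ω, MvPolynomial.eval ![Yk ω, X k ω] (MvPolynomial.pderiv 0 p) ∂μ := hξrel p
    _ = ∫ ω, (Polynomial.derivative q).eval (S ω) ∂μ := by
        congr 1; funext ω
        rw [hpdef, hwdef, pderiv0_aeval, eval_aeval_poly, ← hwdef, hwev]
end

section
/- Let X and Y be independent real random variables on a probability space (Ω, P), all of whose moments are finite. If ξ is a score of X, then ξ is also a score of X relative to Y; that is, E[ξ·p(X,Y)] = E[(∂p/∂x)(X,Y)] for every polynomial p in two real variables. -/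
open MeasureTheory ProbabilityTheory

lemma evalMono (x y c : ℝ) (d : Fin 2 →₀ ℕ) :
    MvPolynomial.eval ![x, y] (MvPolynomial.monomial d c) = c * (x ^ d 0 * y ^ d 1) := by
  rw [MvPolynomial.eval_monomial, Finsupp.prod_fintype _ _ fun i => pow_zero _,
    Fin.prod_univ_two]
  simp

lemma pderivMono (x y c : ℝ) (d : Fin 2 →₀ ℕ) :
    MvPolynomial.eval ![x, y] (MvPolynomial.pderiv 0 (MvPolynomial.monomial d c))
      = (c * d 0) * (x ^ (d 0 - 1) * y ^ d 1) := by
  rw [MvPolynomial.pderiv_monomial, evalMono]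
  simp [Finsupp.tsub_apply, Finsupp.single_apply]

lemma memL2_eval {Ω : Type*} [MeasurableSpace Ω] (μ : Measure Ω) [IsProbabilityMeasure μ]
    (X Y : Ω → ℝ) (hX : Measurable X) (hY : Measurable Y)
    (hindep : IndepFun X Y μ)
    (hmomX : ∀ m : ℕ, Integrable (fun ω => |X ω| ^ m) μ)
    (hmomY : ∀ m : ℕ, Integrable (fun ω => |Y ω| ^ m) μ)
    (p : MvPolynomial (Fin 2) ℝ) :
    MemLp (fun ω => MvPolynomial.eval ![X ω, Y ω] p) 2 μ := by
  induction p using MvPolynomial.induction_on' with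
  | monomial d c =>
    simp only [evalMono]
    refine MemLp.const_mul ?_ c
    rw [memLp_two_iff_integrable_sq (show Measurable (fun ω => X ω ^ d 0 * Y ω ^ d 1) from (hX.pow_const (d 0)).mul
      (hY.pow_const (d 1))).aestronglyMeasurable]
    have hIX : Integrable (fun ω => (X ω ^ d 0) ^ 2) μ := by
      have h := hmomX (2 * d 0)
      have e : (fun ω => |X ω| ^ (2 * d 0)) = fun ω => (X ω ^ d 0) ^ 2 := by
        funext ω; rw [pow_mul, sq_abs, ← pow_mul, mul_comm 2 (d 0), pow_mul]
      rwa [e] at h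
    have hIY : Integrable (fun ω => (Y ω ^ d 1) ^ 2) μ := by
      have h := hmomY (2 * d 1)
      have e : (fun ω => |Y ω| ^ (2 * d 1)) = fun ω => (Y ω ^ d 1) ^ 2 := by
        funext ω; rw [pow_mul, sq_abs, ← pow_mul, mul_comm 2 (d 1), pow_mul]
      rwa [e] at h
    have hi : IndepFun (fun ω => (X ω ^ d 0) ^ 2) (fun ω => (Y ω ^ d 1) ^ 2) μ :=
      hindep.comp ((measurable_id.pow_const (d 0)).pow_const 2)
        ((measurable_id.pow_const (d 1)).pow_const 2)
    have := hi.integrable_mul hIX hIY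
    simpa [mul_pow, Pi.mul_def] using this
  | add p q hp hq =>
    simp only [map_add]
    exact hp.add hq


/-- If `X` and `Y` are independent with all moments finite and `ξ` is a
score of `X`, then `ξ` is also a score of `X` relative to `Y`. -/
theorem isScore_isRelScore_of_indepFun
    {Ω : Type*} [MeasurableSpace Ω] (μ : Measure Ω) [IsProbabilityMeasure μ]
    (X Y : Ω → ℝ) (hX : Measurable X) (hY : Measurable Y)
    (hindep : IndepFun X Y μ)
    (hmomX : ∀ m : ℕ, Integrable (fun ω => |X ω| ^ m) μ)
    (hmomY : ∀ m : ℕ, Integrable (fun ω => |Y ω| ^ m) μ)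
    (ξ : Ω → ℝ) (hξ : IsScore μ X ξ) :
    IsRelScore μ X Y ξ := by
  obtain ⟨hL2, hmeas, hscore⟩ := hξ
  have hξm : Measurable ξ := hmeas.mono hX.comap_le le_rfl
  refine ⟨hL2, ?_, ?_⟩
  · -- measurability wrt comap of the pair
    refine hmeas.mono ?_ le_rfl
    conv_lhs => rw [show X = Prod.fst ∘ (fun ω => (X ω, Y ω)) from rfl]
    rw [← MeasurableSpace.comap_comp]
    exact MeasurableSpace.comap_mono measurable_fst.comap_le
  · -- the score identity
    have hMem2 := memL2_eval μ X Y hX hY hindep hmomX hmomY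
    have hInt1 : ∀ p : MvPolynomial (Fin 2) ℝ,
        Integrable (fun ω => ξ ω * MvPolynomial.eval ![X ω, Y ω] p) μ := by
      intro p
      have h : MemLp (ξ • fun ω => MvPolynomial.eval ![X ω, Y ω] p) 1 μ :=
        (hMem2 p).smul hL2 (r := 1)
      rw [← memLp_one_iff_integrable]
      exact h
    have hInt2 : ∀ p : MvPolynomial (Fin 2) ℝ,
        Integrable (fun ω => MvPolynomial.eval ![X ω, Y ω] p) μ :=
      fun p => (hMem2 p).integrable (by norm_num)
    intro p
    induction p using MvPolynomial.induction_on' with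
    | monomial d c =>
      simp only [evalMono, pderivMono]
      set a := d 0
      set b := d 1
      -- independence facts
      have indep1 : IndepFun (fun ω => ξ ω * X ω ^ a) (fun ω => Y ω ^ b) μ := by
        rw [IndepFun_iff_Indep] at hindep ⊢
        refine indep_of_indep_of_le_left (indep_of_indep_of_le_right hindep ?_) ?_
        · exact ((Measurable.of_comap_le le_rfl).pow_const b).comap_le
        · exact (hmeas.mul ((Measurable.of_comap_le le_rfl).pow_const a)).comap_le
      have indep2 : IndepFun (fun ω => X ω ^ (a - 1)) (fun ω => Y ω ^ b) μ :=
        hindep.comp (measurable_id.pow_const (a - 1)) (measurable_id.pow_const b)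
      have e1 : ∫ ω, (ξ ω * X ω ^ a) * Y ω ^ b ∂μ
          = (∫ ω, ξ ω * X ω ^ a ∂μ) * ∫ ω, Y ω ^ b ∂μ :=
        indep1.integral_fun_mul_eq_mul_integral (hξm.mul (hX.pow_const a)).aestronglyMeasurable
          (hY.pow_const b).aestronglyMeasurable
      have e2 : ∫ ω, ξ ω * X ω ^ a ∂μ = (a : ℝ) * ∫ ω, X ω ^ (a - 1) ∂μ := by
        have h := hscore (Polynomial.X ^ a)
        simp only [Polynomial.eval_pow, Polynomial.eval_X, Polynomial.derivative_X_pow,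
          Polynomial.eval_mul, Polynomial.eval_C, Polynomial.eval_natCast] at h
        rw [h, integral_const_mul]
      have e3 : ∫ ω, X ω ^ (a - 1) * Y ω ^ b ∂μ
          = (∫ ω, X ω ^ (a - 1) ∂μ) * ∫ ω, Y ω ^ b ∂μ :=
        indep2.integral_fun_mul_eq_mul_integral (hX.pow_const (a - 1)).aestronglyMeasurable
          (hY.pow_const b).aestronglyMeasurable
      calc ∫ ω, ξ ω * (c * (X ω ^ a * Y ω ^ b)) ∂μ
          = ∫ ω, c * ((ξ ω * X ω ^ a) * Y ω ^ b) ∂μ := by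
            congr 1; funext ω; ring
        _ = c * ((∫ ω, ξ ω * X ω ^ a ∂μ) * ∫ ω, Y ω ^ b ∂μ) := by
            rw [integral_const_mul, e1]
        _ = c * (a : ℝ) * ((∫ ω, X ω ^ (a - 1) ∂μ) * ∫ ω, Y ω ^ b ∂μ) := by
            rw [e2]; ring
        _ = ∫ ω, (c * a) * (X ω ^ (a - 1) * Y ω ^ b) ∂μ := by
            rw [integral_const_mul, e3]
    | add p q hp hq =>
      have hL : (fun ω => ξ ω * MvPolynomial.eval ![X ω, Y ω] (p + q))
          = fun ω => ξ ω * MvPolynomial.eval ![X ω, Y ω] p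
              + ξ ω * MvPolynomial.eval ![X ω, Y ω] q := by
        funext ω; rw [map_add]; ring
      have hR : (fun ω => MvPolynomial.eval ![X ω, Y ω] (MvPolynomial.pderiv 0 (p + q)))
          = fun ω => MvPolynomial.eval ![X ω, Y ω] (MvPolynomial.pderiv 0 p)
              + MvPolynomial.eval ![X ω, Y ω] (MvPolynomial.pderiv 0 q) := by
        funext ω; rw [map_add, map_add]
      rw [hL, hR, integral_add (hInt1 p) (hInt1 q),
        integral_add (hInt2 _) (hInt2 _), hp, hq]
end
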